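/- arXiv:math/0611279 — 2 statements merged into one kernel-verified Lean document; each statement's English description precedes it below -/
import Mathlib

section
/- Let f : [0,T) → ℝ be a maximal solution of f'' = Ξ(f', f) with f(0) = 1, f'(0) = 1, where Ξ is continuous and Ξ(x,y) ≥ ε x^a y^b for x,y ≥ 1 with ε > 0 and 2a + b ≥ 3. Then f' tends to +∞ as t → T (where T < ∞ is the endpoint of the maximal interval). -/
/-!
Where `f ≥ 1` and `f' ≥ 1` the equation forces `f'' ≥ ε > 0`, so a continuous induction shows
that `f` and `f'` stay `≥ 1` on `[0, T)`; in particular both increase. If `f'` did not tend to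
`+∞` it would be bounded, and then `f'` and (by the mean value theorem) `f` would converge to
finite limits `L` and `M` at `T`. Peano's theorem yields a solution through `(M, L)` on a
neighbourhood of `T`, and glued to `f` it extends `f` beyond `T`, contradicting maximality.
As `Ξ` is merely continuous, Peano's theorem is obtained by approximating the vector field
uniformly by Lipschitz ones (McShane's sup-convolution), solving the approximate problems by
Picard–Lindelöf and passing to the limit along a subsequence given by Arzelà–Ascoli.
-/

/-- `f` solves the ODE `f'' = Ξ(f', f)` on the interval `[0, T)`,
being twice differentiable there. -/
def SolvesODE (Ξ : ℝ → ℝ → ℝ) (f : ℝ → ℝ) (T : ℝ) : Prop :=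
  ∀ t ∈ Set.Ico (0 : ℝ) T,
    DifferentiableAt ℝ f t ∧ DifferentiableAt ℝ (deriv f) t ∧
      deriv (deriv f) t = Ξ (deriv f t) (f t)

open Set Filter Metric Topology
open scoped NNReal

section LipschitzApprox

variable {X : Type*} [PseudoMetricSpace X]

noncomputable def lipschitzApprox (K : Set X) (ξ : X → ℝ) (n : ℕ) (p : X) : ℝ :=
  ⨆ q : K, (ξ q - n * dist p q)

variable {K : Set X} {ξ : X → ℝ}

lemma bddAbove_range_sub_mul_dist (hξ : BddAbove (ξ '' K)) (n : ℕ) (p : X) :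
    BddAbove (range fun q : K => ξ q - n * dist p q) := by
  obtain ⟨B, hB⟩ := hξ
  refine ⟨B, forall_mem_range.2 fun q => ?_⟩
  have := hB (mem_image_of_mem ξ q.2)
  have : 0 ≤ (n : ℝ) * dist p q := by positivity
  linarith

lemma le_lipschitzApprox (hξ : BddAbove (ξ '' K)) (n : ℕ) {p : X} (hp : p ∈ K) :
    ξ p ≤ lipschitzApprox K ξ n p :=
  le_ciSup_of_le (bddAbove_range_sub_mul_dist hξ n p) ⟨p, hp⟩ (by simp)

lemma lipschitzWith_lipschitzApprox [Nonempty K] (hξ : BddAbove (ξ '' K)) (n : ℕ) :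
    LipschitzWith n (lipschitzApprox K ξ n) := by
  refine LipschitzWith.of_le_add_mul _ fun p p' => ciSup_le fun q => ?_
  calc ξ q - n * dist p q ≤ ξ q - n * dist p' q + n * dist p p' := by
        have := dist_triangle_left p' q p
        have : (0 : ℝ) ≤ n := n.cast_nonneg
        nlinarith
    _ ≤ lipschitzApprox K ξ n p' + n * dist p p' := by
        gcongr
        exact le_ciSup (bddAbove_range_sub_mul_dist hξ n p') q

lemma tendstoUniformlyOn_lipschitzApprox (hK : IsCompact K) (hξ : ContinuousOn ξ K) :
    TendstoUniformlyOn (lipschitzApprox K ξ) ξ atTop K := by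
  obtain ⟨D, hD⟩ := hK.exists_bound_of_continuousOn hξ
  have hbdd : BddAbove (ξ '' K) :=
    ⟨D, forall_mem_image.2 fun p hp => (le_abs_self _).trans (hD p hp)⟩
  rw [Metric.tendstoUniformlyOn_iff]
  intro η hη
  obtain ⟨δ, hδ, hξδ⟩ := Metric.uniformContinuousOn_iff.1
    (hK.uniformContinuousOn_of_continuous hξ) (η / 2) (half_pos hη)
  filter_upwards [eventually_ge_atTop ⌈2 * D / δ⌉₊] with n hn p hp
  have hn : 2 * D ≤ n * δ := by
    rw [← div_le_iff₀ hδ]; exact (Nat.le_ceil _).trans (by exact_mod_cast hn)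
  have hle : lipschitzApprox K ξ n p ≤ ξ p + η / 2 := by
    have : Nonempty K := ⟨⟨p, hp⟩⟩
    refine ciSup_le fun q => ?_
    by_cases hpq : dist p q < δ
    · have := hξδ p hp q q.2 hpq
      rw [Real.dist_eq, abs_lt] at this
      have : (0 : ℝ) ≤ n * dist p q := by positivity
      linarith
    · have hq := (abs_le.1 (hD q q.2)).2
      have hp := (abs_le.1 (hD p hp)).1
      have : (n : ℝ) * δ ≤ n * dist p q := by gcongr; exact not_lt.1 hpq
      linarith
  rw [Real.dist_eq, abs_lt]
  constructor <;> linarith [le_lipschitzApprox hbdd n hp]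

theorem exists_lipschitzWith_tendstoUniformlyOn {E : Type*} [NormedAddCommGroup E]
    [NormedSpace ℝ E] [FiniteDimensional ℝ E] (hK : IsCompact K) {v : X → E}
    (hv : ContinuousOn v K) :
    ∃ Q : ℕ → X → E, (∀ n, ∃ C, LipschitzWith C (Q n)) ∧ TendstoUniformlyOn Q v atTop K := by
  rcases K.eq_empty_or_nonempty with rfl | ⟨p₀, hp₀⟩
  · exact ⟨fun _ _ => 0, fun _ => ⟨0, LipschitzWith.const 0⟩, tendstoUniformlyOn_empty⟩
  have : Nonempty K := ⟨⟨p₀, hp₀⟩⟩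
  let e := (Module.finBasis ℝ E).equivFunL
  have hcoord : ∀ i, ContinuousOn (fun x => e (v x) i) K := fun i =>
    (continuous_apply i).comp_continuousOn (e.continuous.comp_continuousOn hv)
  let F : ℕ → X → _ := fun n p i => lipschitzApprox K (fun x => e (v x) i) n p
  have hF : TendstoUniformlyOn F (fun p => e (v p)) atTop K := by
    rw [Metric.tendstoUniformlyOn_iff]
    intro η hη
    have := fun i => Metric.tendstoUniformlyOn_iff.1
      (tendstoUniformlyOn_lipschitzApprox hK (hcoord i)) η hη
    filter_upwards [eventually_all.2 this] with n hn p hp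
    exact (dist_pi_lt_iff hη).2 fun i => hn i p hp
  have hFlip : ∀ n : ℕ, LipschitzWith n (F n) := fun n =>
    LipschitzWith.of_dist_le_mul fun p q => (dist_pi_le_iff (by positivity)).2 fun i =>
      (lipschitzWith_lipschitzApprox
        (hK.image_of_continuousOn (hcoord i)).bddAbove n).dist_le_mul p q
  refine ⟨fun n p => e.symm (F n p), fun n => ⟨_, e.symm.lipschitz.comp (hFlip n)⟩, ?_⟩
  have := e.symm.lipschitz.uniformContinuous.comp_tendstoUniformlyOn hF
  simpa only [Function.comp_def, ContinuousLinearEquiv.symm_apply_apply] using this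

end LipschitzApprox

theorem ContinuousMap.isCompact_setOf_lipschitzWith_mem_closedBall {X E : Type*}
    [PseudoMetricSpace X] [PseudoMetricSpace E] [ProperSpace E] (C : ℝ≥0) (x₀ : E) (r : ℝ) :
    IsCompact {g : C(X, E) | LipschitzWith C g ∧ ∀ x, g x ∈ closedBall x₀ r} := by
  refine ArzelaAscoli.isCompact_of_equicontinuous _ ?_
    (LipschitzWith.uniformEquicontinuous _ C fun g => g.2.1).equicontinuous
  have himage :
      ContinuousMap.toFun '' {g : C(X, E) | LipschitzWith C g ∧ ∀ x, g x ∈ closedBall x₀ r} =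
        {g : X → E | LipschitzWith C g} ∩ Set.pi univ fun _ => closedBall x₀ r := by
    ext g
    refine ⟨?_, fun hg => ⟨⟨g, hg.1.continuous⟩, ⟨hg.1, fun x => hg.2 x trivial⟩, rfl⟩⟩
    rintro ⟨g, hg, rfl⟩
    exact ⟨hg.1, fun x _ => hg.2 x⟩
  rw [himage]
  exact (isCompact_univ_pi fun _ => isCompact_closedBall x₀ r).inter_left
    (isClosed_setOfPred_lipschitzWith C)

theorem IsPicardLindelof.exists_lipschitzWith_eq_picard {E : Type*} [NormedAddCommGroup E]
    [NormedSpace ℝ E] [CompleteSpace E] {f : ℝ → E → E} {tmin tmax : ℝ} {t₀ : Icc tmin tmax}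
    {x₀ : E} {a L K : ℝ≥0} (hf : IsPicardLindelof f t₀ x₀ a 0 L K) :
    ∃ α : ℝ → E, LipschitzWith L α ∧ (∀ t, α t ∈ closedBall x₀ a) ∧
      ∀ t ∈ Icc tmin tmax, α t = ODE.picard f t₀ x₀ α t := by
  obtain ⟨α, hα⟩ := ODE.FunSpace.exists_isFixedPt_next hf (mem_closedBall_self le_rfl)
  refine ⟨α.compProj, ?_, fun t => α.compProj_mem_closedBall hf.mul_max_le, fun t ht => ?_⟩
  · have := α.lipschitzWith.comp (LipschitzWith.projIcc (t₀.2.1.trans t₀.2.2))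
    rwa [mul_one] at this
  · rw [ODE.FunSpace.compProj_of_mem ht]
    exact (congrArg (· ⟨t, ht⟩) hα).symm

theorem tendsto_picard_of_tendstoUniformlyOn {E : Type*} [NormedAddCommGroup E]
    [NormedSpace ℝ E] {Q : ℕ → E → E} {v : E → E} {s : Set E} {C : ℝ} {α : ℕ → ℝ → E}
    {β : ℝ → E} (hQ : ∀ n, Continuous (Q n)) (hv : Continuous v)
    (hQv : TendstoUniformlyOn Q v atTop s) (hQC : ∀ n, ∀ x ∈ s, ‖Q n x‖ ≤ C)
    (hα : ∀ n, Continuous (α n)) (hαs : ∀ n t, α n t ∈ s)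
    (hαβ : ∀ t, Tendsto (fun n => α n t) atTop (𝓝 (β t))) (t₀ : ℝ) (x₀ : E) (t : ℝ) :
    Tendsto (fun n => ODE.picard (fun _ => Q n) t₀ x₀ (α n) t) atTop
      (𝓝 (ODE.picard (fun _ => v) t₀ x₀ β t)) := by
  refine tendsto_const_nhds.add <|
    intervalIntegral.tendsto_integral_filter_of_dominated_convergence (fun _ => C)
      (Eventually.of_forall fun n => ((hQ n).comp (hα n)).aestronglyMeasurable)
      (Eventually.of_forall fun n => MeasureTheory.ae_of_all _ fun τ _ => hQC n _ (hαs n τ))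
      intervalIntegrable_const (MeasureTheory.ae_of_all _ fun τ _ => ?_)
  exact hQv.tendsto_comp hv.continuousWithinAt
    (tendsto_nhdsWithin_iff.2 ⟨hαβ τ, Eventually.of_forall fun n => hαs n τ⟩)

theorem TendstoUniformlyOn.comp_tendsto {ι ι' α β : Type*} [UniformSpace β] {F : ι → α → β}
    {f : α → β} {p : Filter ι} {p' : Filter ι'} {s : Set α} (h : TendstoUniformlyOn F f p s)
    {g : ι' → ι} (hg : Tendsto g p' p) : TendstoUniformlyOn (fun i => F (g i)) f p' s :=
  fun u hu => hg.eventually (h u hu)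

theorem exists_forall_mem_Icc_eq_picard_of_continuous {E : Type*} [NormedAddCommGroup E]
    [NormedSpace ℝ E] [FiniteDimensional ℝ E] {v : E → E} (hv : Continuous v) (t₀ : ℝ)
    (x₀ : E) : ∃ δ > 0, ∃ α : ℝ → E, Continuous α ∧
      ∀ t ∈ Icc (t₀ - δ) (t₀ + δ), α t = ODE.picard (fun _ => v) t₀ x₀ α t := by
  obtain ⟨Q, hQlip, hQv⟩ :=
    exists_lipschitzWith_tendstoUniformlyOn (isCompact_closedBall x₀ 1) hv.continuousOn
  choose K hK using hQlip
  obtain ⟨B, hB⟩ := (isCompact_closedBall x₀ 1).exists_bound_of_continuousOn hv.continuousOn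
  obtain ⟨N, hN⟩ := eventually_atTop.1 (Metric.tendstoUniformlyOn_iff.1 hQv 1 one_pos)
  let C : ℝ≥0 := ⟨max B 0 + 1, by positivity⟩
  have hQC : ∀ n, ∀ x ∈ closedBall x₀ 1, ‖Q (n + N) x‖ ≤ C := fun n x hx => by
    have h1 := hN (n + N) (Nat.le_add_left N n) x hx
    rw [dist_eq_norm'] at h1
    have h2 := norm_le_norm_add_norm_sub' (Q (n + N) x) (v x)
    have h3 := (hB x hx).trans (le_max_left B 0)
    change _ ≤ max B 0 + 1
    linarith
  have hC : (0 : ℝ) < C := by change (0 : ℝ) < max B 0 + 1; positivity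
  set δ : ℝ := 1 / C with hδ
  have hδ0 : 0 < δ := by positivity
  have ht₀ : t₀ ∈ Icc (t₀ - δ) (t₀ + δ) := ⟨by linarith, by linarith⟩
  have hpl : ∀ n, IsPicardLindelof (fun _ => Q (n + N)) ⟨t₀, ht₀⟩ x₀ 1 0 C (K (n + N)) :=
    fun n => .of_time_independent (hQC n) (hK (n + N)).lipschitzOnWith <| by
      simp only [add_sub_cancel_left, sub_sub_cancel, max_self, NNReal.coe_one,
        NNReal.coe_zero, sub_zero, hδ]
      rw [mul_one_div_cancel hC.ne']
  choose α hαlip hαball hαeq using fun n => (hpl n).exists_lipschitzWith_eq_picard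
  obtain ⟨β, -, φ, hφ, hαβ⟩ := (ContinuousMap.isCompact_setOf_lipschitzWith_mem_closedBall
    (X := ℝ) C x₀ 1).tendsto_subseq (x := fun n => ⟨α n, (hαlip n).continuous⟩)
    fun n => ⟨hαlip n, hαball n⟩
  have hαβ' : ∀ t, Tendsto (fun k => α (φ k) t) atTop (𝓝 (β t)) := fun t =>
    ((continuous_eval_const t).tendsto β).comp hαβ
  refine ⟨δ, hδ0, β, β.continuous, fun t ht => tendsto_nhds_unique (hαβ' t) ?_⟩
  have := tendsto_picard_of_tendstoUniformlyOn (Q := fun k => Q (φ k + N))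
    (fun k => (hK _).continuous) hv
    (hQv.comp_tendsto ((tendsto_add_atTop_nat N).comp hφ.tendsto_atTop)) (fun k => hQC (φ k))
    (fun k => (hαlip (φ k)).continuous) (fun k => hαball (φ k)) hαβ' t₀ x₀ t
  exact this.congr fun k => (hαeq (φ k) t ht).symm

theorem exists_eventually_hasDerivAt_of_continuous {E : Type*} [NormedAddCommGroup E]
    [NormedSpace ℝ E] [FiniteDimensional ℝ E] {v : E → E} (hv : Continuous v) (t₀ : ℝ)
    (x₀ : E) : ∃ α : ℝ → E, α t₀ = x₀ ∧ ∀ᶠ t in 𝓝 t₀, HasDerivAt α (v (α t)) t := by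
  obtain ⟨δ, hδ, α, hα, hαeq⟩ := exists_forall_mem_Icc_eq_picard_of_continuous hv t₀ x₀
  refine ⟨α, by simpa using hαeq t₀ ⟨by linarith, by linarith⟩, ?_⟩
  filter_upwards [Ioo_mem_nhds (show t₀ - δ < t₀ by linarith) (show t₀ < t₀ + δ by linarith)]
    with t ht
  have hpicard : α =ᶠ[𝓝 t] ODE.picard (fun _ => v) t₀ x₀ α :=
    eventuallyEq_of_mem (Ioo_mem_nhds ht.1 ht.2) fun s hs => hαeq s (Ioo_subset_Icc_self hs)
  exact (((hv.comp hα).integral_hasStrictDerivAt t₀ t).hasDerivAt.const_add x₀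
    ).congr_of_eventuallyEq hpicard

theorem hasDerivAt_ite_of_tendsto_deriv {E : Type*} [NormedAddCommGroup E] [NormedSpace ℝ E]
    {f g : ℝ → E} {a c : ℝ} {e : E} (hc : c < a) (hf : DifferentiableOn ℝ f (Ioo c a))
    (hfa : Tendsto f (𝓝[<] a) (𝓝 (g a))) (hf' : Tendsto (deriv f) (𝓝[<] a) (𝓝 e))
    (hg : HasDerivAt g e a) : HasDerivAt (fun t => if t < a then f t else g t) e a := by
  have hleft : HasDerivWithinAt (fun t => if t < a then f t else g t) e (Iic a) a := by
    refine hasDerivWithinAt_Iic_of_tendsto_deriv (s := Ioo c a)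
      (hf.congr fun t ht => if_pos ht.2) ?_ (Ioo_mem_nhdsLT hc) ?_
    · simp only [ContinuousWithinAt, lt_irrefl, if_false]
      exact (hfa.mono_left (nhdsWithin_mono _ Ioo_subset_Iio_self)).congr'
        (eventually_nhdsWithin_of_forall fun t ht => (if_pos ht.2).symm)
    · refine hf'.congr' ?_
      filter_upwards [self_mem_nhdsWithin] with t (ht : t < a)
      exact (Filter.eventuallyEq_of_mem (Iio_mem_nhds ht) fun s hs => if_pos hs).deriv_eq.symm
  have hright : HasDerivWithinAt (fun t => if t < a then f t else g t) e (Ici a) a :=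
    hg.hasDerivWithinAt.congr (fun t ht => if_neg (not_lt.2 ht)) (if_neg (lt_irrefl a))
  simpa using hleft.union hright

/-- `SolvesODE Ξ f T` unfolds to `∀ t ∈ Ico 0 T, SolvesODEAt Ξ f t`. -/
def SolvesODEAt (Ξ : ℝ → ℝ → ℝ) (f : ℝ → ℝ) (t : ℝ) : Prop :=
  DifferentiableAt ℝ f t ∧ DifferentiableAt ℝ (deriv f) t ∧
    deriv (deriv f) t = Ξ (deriv f t) (f t)

namespace SolvesODEAt

variable {Ξ : ℝ → ℝ → ℝ} {f g : ℝ → ℝ} {t : ℝ}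

theorem congr_of_eventuallyEq (hf : SolvesODEAt Ξ f t) (hg : g =ᶠ[𝓝 t] f) :
    SolvesODEAt Ξ g t := by
  have hg' := hg.deriv
  refine ⟨hg.differentiableAt_iff.2 hf.1, hg'.differentiableAt_iff.2 hf.2.1, ?_⟩
  rw [hg'.deriv_eq, hf.2.2, hg'.eq_of_nhds, hg.eq_of_nhds]

theorem ite (hΞ : Continuous fun p : ℝ × ℝ => Ξ p.1 p.2) {c : ℝ} (hc : c < t)
    (hf : ∀ s ∈ Ioo c t, SolvesODEAt Ξ f s) (hft : Tendsto f (𝓝[<] t) (𝓝 (g t)))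
    (hf't : Tendsto (deriv f) (𝓝[<] t) (𝓝 (deriv g t))) (hg : SolvesODEAt Ξ g t) :
    SolvesODEAt Ξ (fun s => if s < t then f s else g s) t := by
  have h₁ : HasDerivAt (fun s => if s < t then f s else g s) (deriv g t) t :=
    hasDerivAt_ite_of_tendsto_deriv hc (fun s hs => (hf s hs).1.differentiableWithinAt) hft hf't
      hg.1.hasDerivAt
  have hderiv : deriv (fun s => if s < t then f s else g s) =
      fun s => if s < t then deriv f s else deriv g s := by
    funext s
    rcases lt_trichotomy s t with hs | rfl | hs
    · rw [if_pos hs]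
      exact (Filter.eventuallyEq_of_mem (Iio_mem_nhds hs) fun r hr => if_pos hr).deriv_eq
    · rw [if_neg (lt_irrefl s), h₁.deriv]
    · rw [if_neg (not_lt.2 hs.le)]
      exact (Filter.eventuallyEq_of_mem (Ioi_mem_nhds hs)
        fun r hr => if_neg (not_lt.2 (le_of_lt hr))).deriv_eq
  have hf''t : Tendsto (deriv (deriv f)) (𝓝[<] t) (𝓝 (deriv (deriv g) t)) := by
    rw [hg.2.2]
    refine ((hΞ.tendsto _).comp (hf't.prodMk_nhds hft)).congr' ?_
    filter_upwards [Ioo_mem_nhdsLT hc] with s hs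
    exact ((hf s hs).2.2).symm
  have h₂ : HasDerivAt (deriv fun s => if s < t then f s else g s) (deriv (deriv g) t) t := by
    rw [hderiv]
    exact hasDerivAt_ite_of_tendsto_deriv hc (fun s hs => (hf s hs).2.1.differentiableWithinAt)
      hf't hf''t hg.2.1.hasDerivAt
  refine ⟨h₁.differentiableAt, h₂.differentiableAt, ?_⟩
  rw [h₂.deriv, h₁.deriv, hg.2.2]
  simp

end SolvesODEAt

theorem exists_eventually_solvesODEAt {Ξ : ℝ → ℝ → ℝ}
    (hΞ : Continuous fun p : ℝ × ℝ => Ξ p.1 p.2) (t₀ x₀ x₁ : ℝ) :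
    ∃ f : ℝ → ℝ, f t₀ = x₀ ∧ deriv f t₀ = x₁ ∧ ∀ᶠ t in 𝓝 t₀, SolvesODEAt Ξ f t := by
  obtain ⟨α, hα₀, hα⟩ := exists_eventually_hasDerivAt_of_continuous
    (v := fun p : ℝ × ℝ => (p.2, Ξ p.2 p.1)) (by fun_prop) t₀ (x₀, x₁)
  have hfst : ∀ᶠ t in 𝓝 t₀, HasDerivAt (fun s => (α s).1) (α t).2 t :=
    hα.mono fun t ht => ht.fst
  refine ⟨fun s => (α s).1, by simp [hα₀], by rw [(hfst.self_of_nhds).deriv, hα₀], ?_⟩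
  filter_upwards [hα.eventually_nhds, hfst.eventually_nhds] with t hαt hfstt
  have hderiv : deriv (fun s => (α s).1) =ᶠ[𝓝 t] fun s => (α s).2 :=
    hfstt.mono fun s hs => hs.deriv
  have hsnd : HasDerivAt (fun s => (α s).2) (Ξ (α t).2 (α t).1) t := hαt.self_of_nhds.snd
  refine ⟨hfstt.self_of_nhds.differentiableAt,
    (hsnd.congr_of_eventuallyEq hderiv).differentiableAt, ?_⟩
  rw [hderiv.deriv_eq, hsnd.deriv, hderiv.eq_of_nhds]

theorem SolvesODE.exists_extension {Ξ : ℝ → ℝ → ℝ} (hΞ : Continuous fun p : ℝ × ℝ => Ξ p.1 p.2)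
    {f : ℝ → ℝ} {T M L : ℝ} (hT : 0 < T) (hf : SolvesODE Ξ f T)
    (hfT : Tendsto f (𝓝[<] T) (𝓝 M)) (hf'T : Tendsto (deriv f) (𝓝[<] T) (𝓝 L)) :
    ∃ T' > T, ∃ g : ℝ → ℝ, (∀ t ∈ Ico 0 T, g t = f t) ∧ SolvesODE Ξ g T' := by
  obtain ⟨y, hyT, hy'T, hy⟩ := exists_eventually_solvesODEAt hΞ T M L
  obtain ⟨δ, hδ, hyδ⟩ := Metric.eventually_nhds_iff.1 hy
  refine ⟨T + δ, by linarith, fun t => if t < T then f t else y t, fun t ht => if_pos ht.2,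
    fun t ht => ?_⟩
  rcases lt_trichotomy t T with htT | rfl | htT
  · exact SolvesODEAt.congr_of_eventuallyEq (hf t ⟨ht.1, htT⟩)
      (eventuallyEq_of_mem (Iio_mem_nhds htT) fun s hs => if_pos hs)
  · exact SolvesODEAt.ite hΞ hT (fun s hs => hf s (Ioo_subset_Ico_self hs)) (hyT ▸ hfT)
      (hy'T ▸ hf'T) (hyδ (by simpa using hδ))
  · refine (hyδ ?_).congr_of_eventuallyEq
      (eventuallyEq_of_mem (Ioi_mem_nhds htT) fun s hs => if_neg (not_lt.2 (le_of_lt hs)))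
    rw [Real.dist_eq, abs_lt]
    constructor <;> linarith [ht.2]

theorem HasDerivAt.eventually_nhdsGT_lt_of_pos {φ : ℝ → ℝ} {x d : ℝ} (h : HasDerivAt φ d x)
    (hd : 0 < d) : ∀ᶠ y in 𝓝[>] x, φ x < φ y := by
  have hslope := h.tendsto_slope.mono_left (nhdsWithin_mono x fun y (hy : x < y) => hy.ne')
  filter_upwards [hslope.eventually (eventually_gt_nhds hd), self_mem_nhdsWithin]
    with y hy (hxy : x < y)
  exact (slope_pos_iff_of_le hxy.le).1 hy

theorem MonotoneOn.tendsto_atTop_nhdsLT_of_not_bddAbove {α β : Type*} [LinearOrder α]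
    [TopologicalSpace α] [OrderTopology α] [LinearOrder β] {f : α → β} {c a : α}
    (hf : MonotoneOn f (Ioo c a)) (h : ¬BddAbove (f '' Ioo c a)) :
    Tendsto f (𝓝[<] a) atTop := by
  refine tendsto_atTop.2 fun b => ?_
  obtain ⟨_, ⟨x, hx, rfl⟩, hbx⟩ := not_bddAbove_iff.1 h b
  filter_upwards [Ioo_mem_nhdsLT hx.2] with y hy
  exact hbx.le.trans (hf hx ⟨hx.1.trans hy.1, hy.2⟩ hy.1.le)

theorem monotoneOn_Ioo_of_deriv_nonneg {φ : ℝ → ℝ} {a b : ℝ}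
    (hφ : ∀ t ∈ Ioo a b, DifferentiableAt ℝ φ t) (hφ' : ∀ t ∈ Ioo a b, 0 ≤ deriv φ t) :
    MonotoneOn φ (Ioo a b) :=
  monotoneOn_of_deriv_nonneg (convex_Ioo a b)
    (fun t ht => (hφ t ht).continuousAt.continuousWithinAt)
    (by rw [interior_Ioo]; exact fun t ht => (hφ t ht).differentiableWithinAt)
    (by rwa [interior_Ioo])

namespace SolvesODE

variable {Ξ : ℝ → ℝ → ℝ} {f : ℝ → ℝ} {T : ℝ}

theorem one_le (hΞ : ∀ x y, 1 ≤ x → 1 ≤ y → 0 < Ξ x y) (hf : SolvesODE Ξ f T)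
    (h₀ : 1 ≤ f 0) (h₀' : 1 ≤ deriv f 0) : ∀ t ∈ Ico 0 T, 1 ≤ f t ∧ 1 ≤ deriv f t := by
  intro t ht
  suffices Icc 0 t ⊆ {s | 1 ≤ f s ∧ 1 ≤ deriv f s} from this ⟨ht.1, le_rfl⟩
  refine IsClosed.Icc_subset_of_forall_mem_nhdsWithin ?_ ⟨h₀, h₀'⟩ ?_
  · have hcont : ContinuousOn (fun s => (f s, deriv f s)) (Icc 0 t) := fun s hs =>
      have hs' : s ∈ Ico 0 T := ⟨hs.1, hs.2.trans_lt ht.2⟩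
      ((hf s hs').1.continuousAt.prodMk (hf s hs').2.1.continuousAt).continuousWithinAt
    rw [inter_comm]
    exact hcont.preimage_isClosed_of_isClosed isClosed_Icc (isClosed_Ici.prod isClosed_Ici)
  · rintro s ⟨⟨hfs, hf's⟩, hs⟩
    obtain ⟨hd, hd', hd''⟩ := hf s ⟨hs.1, hs.2.trans ht.2⟩
    filter_upwards [hd.hasDerivAt.eventually_nhdsGT_lt_of_pos (by linarith),
      hd'.hasDerivAt.eventually_nhdsGT_lt_of_pos (hd'' ▸ hΞ _ _ hf's hfs)] with r h h'
    exact ⟨hfs.trans h.le, hf's.trans h'.le⟩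

theorem monotoneOn (hΞ : ∀ x y, 1 ≤ x → 1 ≤ y → 0 < Ξ x y) (hf : SolvesODE Ξ f T)
    (h₀ : 1 ≤ f 0) (h₀' : 1 ≤ deriv f 0) :
    MonotoneOn f (Ioo 0 T) ∧ MonotoneOn (deriv f) (Ioo 0 T) := by
  have hge := hf.one_le hΞ h₀ h₀'
  refine ⟨monotoneOn_Ioo_of_deriv_nonneg (fun t ht => (hf t (Ioo_subset_Ico_self ht)).1)
    fun t ht => zero_le_one.trans (hge t (Ioo_subset_Ico_self ht)).2,
    monotoneOn_Ioo_of_deriv_nonneg (fun t ht => (hf t (Ioo_subset_Ico_self ht)).2.1)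
    fun t ht => ?_⟩
  obtain ⟨hft, hf't⟩ := hge t (Ioo_subset_Ico_self ht)
  exact ((hf t (Ioo_subset_Ico_self ht)).2.2 ▸ hΞ _ _ hf't hft).le

theorem bddAbove_image_of_bddAbove_deriv (hf : SolvesODE Ξ f T)
    (hL : BddAbove (deriv f '' Ioo 0 T)) : BddAbove (f '' Ioo 0 T) := by
  obtain ⟨L, hL⟩ := hL
  refine ⟨f 0 + max L 0 * T, forall_mem_image.2 fun t ht => ?_⟩
  have := (convex_Ico 0 T).image_sub_le_mul_sub_of_deriv_le
    (fun s hs => (hf s hs).1.continuousAt.continuousWithinAt)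
    (by
      rw [interior_Ico]
      exact fun s hs => (hf s (Ioo_subset_Ico_self hs)).1.differentiableWithinAt)
    (by rw [interior_Ico]; exact fun s hs => hL (mem_image_of_mem _ hs))
    0 ⟨le_rfl, ht.1.trans ht.2⟩ t (Ioo_subset_Ico_self ht) ht.1.le
  have : L * t ≤ max L 0 * T := by
    nlinarith [le_max_left L 0, le_max_right L 0, ht.1, ht.2]
  linarith

end SolvesODE

theorem stmt_1_general (Ξ : ℝ → ℝ → ℝ) (hΞcont : Continuous fun p : ℝ × ℝ => Ξ p.1 p.2)
    (ε : ℝ) (hε : 0 < ε) (a b : ℕ)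
    (hlb : ∀ x y : ℝ, 1 ≤ x → 1 ≤ y → ε * x ^ a * y ^ b ≤ Ξ x y)
    (T : ℝ) (hT : 0 < T) (f : ℝ → ℝ)
    (hf0 : f 0 = 1) (hf'0 : deriv f 0 = 1)
    (hsol : SolvesODE Ξ f T)
    (hmax : ¬ ∃ (T' : ℝ) (g : ℝ → ℝ), T < T' ∧
        (∀ t ∈ Set.Ico (0 : ℝ) T, g t = f t) ∧ SolvesODE Ξ g T') :
    Filter.Tendsto (deriv f) (nhdsWithin T (Set.Iio T)) Filter.atTop := by
  have hpos : ∀ x y : ℝ, 1 ≤ x → 1 ≤ y → 0 < Ξ x y := fun x y hx hy =>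
    (mul_pos (mul_pos hε (pow_pos (by linarith) a)) (pow_pos (by linarith) b)).trans_le
      (hlb x y hx hy)
  obtain ⟨hf_mono, hf'_mono⟩ := hsol.monotoneOn hpos hf0.ge hf'0.ge
  by_contra hblowup
  have hf'_bdd : BddAbove (deriv f '' Ioo 0 T) := by
    by_contra h
    exact hblowup (hf'_mono.tendsto_atTop_nhdsLT_of_not_bddAbove h)
  have hne : (Ioo 0 T).Nonempty := nonempty_Ioo.2 hT
  obtain ⟨T', hT', g, hgf, hg⟩ := hsol.exists_extension hΞcont hT
    (hf_mono.tendsto_nhdsWithin_Ioo_left hne (hsol.bddAbove_image_of_bddAbove_deriv hf'_bdd))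
    (hf'_mono.tendsto_nhdsWithin_Ioo_left hne hf'_bdd)
  exact hmax ⟨T', g, hT', hgf, hg⟩

theorem stmt_1 (Ξ : ℝ → ℝ → ℝ) (hΞcont : Continuous fun p : ℝ × ℝ => Ξ p.1 p.2)
    (ε : ℝ) (hε : 0 < ε) (a b : ℕ) (hab : 3 ≤ 2 * a + b)
    (hlb : ∀ x y : ℝ, 1 ≤ x → 1 ≤ y → ε * x ^ a * y ^ b ≤ Ξ x y)
    (T : ℝ) (hT : 0 < T) (f : ℝ → ℝ)
    (hf0 : f 0 = 1) (hf'0 : deriv f 0 = 1)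
    (hsol : SolvesODE Ξ f T)
    (hmax : ¬ ∃ (T' : ℝ) (g : ℝ → ℝ), T < T' ∧
        (∀ t ∈ Set.Ico (0 : ℝ) T, g t = f t) ∧ SolvesODE Ξ g T') :
    Filter.Tendsto (deriv f) (nhdsWithin T (Set.Iio T)) Filter.atTop :=
  stmt_1_general Ξ hΞcont ε hε a b hlb T hT f hf0 hf'0 hsol hmax
end

section
/- Let p : ℝ → ℝ be smooth with p(y) ≥ y for all y ≥ 1. Then any maximal solution x₁ : [0,T) → ℝ of ẍ₁ = ẋ₁·p(x₁) with x₁(0) = 1, ẋ₁(0) = 1 has T < ∞ and ẋ₁(t) → ∞ as t → T. -/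
open Set Filter Topology intervalIntegral

/-- Core differential inequalities on `[0, b]`. -/
lemma geo_aux (p : ℝ → ℝ) (hp : Continuous p)
    (hpy : ∀ y : ℝ, 1 ≤ y → y ≤ p y)
    (x₁ : ℝ → ℝ) (hx0 : x₁ 0 = 1) (hx'0 : deriv x₁ 0 = 1)
    (b : ℝ) (hb0 : 0 ≤ b)
    (hD : ∀ t ∈ Icc (0:ℝ) b, DifferentiableAt ℝ x₁ t ∧ DifferentiableAt ℝ (deriv x₁) t ∧
      deriv (deriv x₁) t = deriv x₁ t * p (x₁ t)) :
    (∀ t ∈ Icc (0:ℝ) b, 0 < deriv x₁ t ∧ 1 ≤ x₁ t) ∧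
    MonotoneOn (deriv x₁) (Icc (0:ℝ) b) ∧ b < 2 := by
  set v := deriv x₁ with hv
  -- clamp function
  set e : ℝ → ℝ := fun t => max 0 (min t b) with he
  have he_mem : ∀ t, e t ∈ Icc (0:ℝ) b := by
    intro t
    refine ⟨le_max_left _ _, ?_⟩
    simp only [he, max_le_iff]
    exact ⟨hb0, min_le_right _ _⟩
  have he_id : ∀ t ∈ Icc (0:ℝ) b, e t = t := by
    intro t ht
    simp only [he]
    rw [min_eq_left ht.2, max_eq_right ht.1]
  have he_cont : Continuous e := continuous_const.max (continuous_id.min continuous_const)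
  -- continuous version of p ∘ x₁
  set q : ℝ → ℝ := fun t => p (x₁ (e t)) with hq
  have hq_cont : Continuous q := by
    refine hp.comp ?_
    refine continuous_iff_continuousAt.2 fun t => ?_
    exact ((hD (e t) (he_mem t)).1.continuousAt).comp he_cont.continuousAt
  have hq_eq : ∀ t ∈ Icc (0:ℝ) b, q t = p (x₁ t) := fun t ht => by
    show p (x₁ (e t)) = p (x₁ t); rw [he_id t ht]
  -- derivative facts
  have hDv : ∀ t ∈ Icc (0:ℝ) b, HasDerivAt v (v t * q t) t := by
    intro t ht
    have h1 := (hD t ht).2.1.hasDerivAt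
    rwa [(hD t ht).2.2, ← hq_eq t ht] at h1
  have hDx : ∀ t ∈ Icc (0:ℝ) b, HasDerivAt x₁ (v t) t := fun t ht => (hD t ht).1.hasDerivAt
  -- integral of q
  set G : ℝ → ℝ := fun t => ∫ s in (0:ℝ)..t, q s with hG
  have hG0 : G 0 = 0 := by simp [hG]
  have hDG : ∀ t : ℝ, HasDerivAt G (q t) t := fun t =>
    (hq_cont.integral_hasStrictDerivAt 0 t).hasDerivAt
  -- h = v * exp(-G) is constant 1
  set h : ℝ → ℝ := fun t => v t * Real.exp (-G t) with hh
  have hDh : ∀ t ∈ Icc (0:ℝ) b, HasDerivAt h 0 t := by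
    intro t ht
    have hexp : HasDerivAt (fun t => Real.exp (-G t)) (-q t * Real.exp (-G t)) t := by
      have := ((hDG t).neg).exp
      exact this.congr_deriv (by rw [Pi.neg_apply]; ring)
    have := (hDv t ht).mul hexp
    exact this.congr_deriv (by ring)
  have hconst : ∀ t ∈ Icc (0:ℝ) b, h t = 1 := by
    have := constant_of_has_deriv_right_zero (f := h) (a := 0) (b := b)
      (fun t ht => (hDh t ht).continuousAt.continuousWithinAt)
      (fun t ht => ((hDh t (Ico_subset_Icc_self ht)).hasDerivWithinAt))
    intro t ht
    rw [this t ht]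
    simp [hh, hG0, hx'0]
  -- positivity of v
  have hvpos : ∀ t ∈ Icc (0:ℝ) b, 0 < v t := by
    intro t ht
    have h1 : v t * Real.exp (-G t) = 1 := hconst t ht
    have h2 : 0 < Real.exp (-G t) := Real.exp_pos _
    nlinarith [h1, h2]
  -- x₁ ≥ 1 on [0,b]
  have hxcont : ContinuousOn x₁ (Icc (0:ℝ) b) := fun t ht => (hD t ht).1.continuousAt.continuousWithinAt
  have hxmono : MonotoneOn x₁ (Icc (0:ℝ) b) := by
    refine monotoneOn_of_deriv_nonneg (convex_Icc _ _) hxcont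
      (fun t ht => ((hD t (interior_subset ht)).1).differentiableWithinAt) ?_
    intro t ht
    rw [interior_Icc] at ht
    exact (hvpos t (Ioo_subset_Icc_self ht)).le
  have hxge : ∀ t ∈ Icc (0:ℝ) b, 1 ≤ x₁ t := by
    intro t ht
    have := hxmono (left_mem_Icc.2 hb0) ht ht.1
    rwa [hx0] at this
  -- v monotone
  have hvmono : MonotoneOn v (Icc (0:ℝ) b) := by
    refine monotoneOn_of_deriv_nonneg (convex_Icc _ _)
      (fun t ht => (hD t ht).2.1.continuousAt.continuousWithinAt)
      (fun t ht => ((hD t (interior_subset ht)).2.1).differentiableWithinAt) ?_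
    intro t ht
    rw [interior_Icc] at ht
    have ht' := Ioo_subset_Icc_self ht
    rw [(hD t ht').2.2]
    have h1 := hvpos t ht'
    have h2 : (1:ℝ) ≤ p (x₁ t) := le_trans (hxge t ht') (hpy _ (hxge t ht'))
    positivity
  -- w = v - x²/2 monotone, hence v ≥ x²/2
  have hwmono : MonotoneOn (fun t => v t - (x₁ t)^2/2) (Icc (0:ℝ) b) := by
    have hDw : ∀ t ∈ Icc (0:ℝ) b,
        HasDerivAt (fun t => v t - (x₁ t)^2/2) (v t * q t - x₁ t * v t) t := by
      intro t ht
      have h2 : HasDerivAt (fun t => (x₁ t)^2/2) (x₁ t * v t) t := by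
        have := ((hDx t ht).pow 2).div_const 2
        exact this.congr_deriv (by norm_num; ring)
      exact (hDv t ht).sub h2
    refine monotoneOn_of_deriv_nonneg (convex_Icc _ _)
      (fun t ht => (hDw t ht).continuousAt.continuousWithinAt)
      (fun t ht => (hDw t (interior_subset ht)).differentiableAt.differentiableWithinAt) ?_
    intro t ht
    rw [interior_Icc] at ht
    have ht' := Ioo_subset_Icc_self ht
    rw [(hDw t ht').deriv]
    have h1 := hvpos t ht'
    have h2 := hxge t ht'
    have h3 : x₁ t ≤ p (x₁ t) := hpy _ h2
    rw [hq_eq t ht']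
    nlinarith
  have hvge : ∀ t ∈ Icc (0:ℝ) b, (x₁ t)^2/2 ≤ v t := by
    intro t ht
    have := hwmono (left_mem_Icc.2 hb0) ht ht.1
    change v 0 - x₁ 0 ^ 2 / 2 ≤ v t - x₁ t ^ 2 / 2 at this
    rw [hx0, hx'0] at this
    nlinarith
  -- u = t + 2/x antitone
  have huanti : AntitoneOn (fun t => t + 2/(x₁ t)) (Icc (0:ℝ) b) := by
    have hDu : ∀ t ∈ Icc (0:ℝ) b,
        HasDerivAt (fun t => t + 2/(x₁ t)) (1 + 2 * (-(v t) / (x₁ t)^2)) t := by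
      intro t ht
      have hne : x₁ t ≠ 0 := by have := hxge t ht; linarith
      have h2 : HasDerivAt (fun t => 2/(x₁ t)) (2 * (-(v t) / (x₁ t)^2)) t := by
        have := ((hDx t ht).inv hne).const_mul 2
        simpa [div_eq_mul_inv] using this
      exact (hasDerivAt_id t).add h2
    refine antitoneOn_of_deriv_nonpos (convex_Icc _ _)
      (fun t ht => (hDu t ht).continuousAt.continuousWithinAt)
      (fun t ht => (hDu t (interior_subset ht)).differentiableAt.differentiableWithinAt) ?_
    intro t ht
    rw [interior_Icc] at ht
    have ht' := Ioo_subset_Icc_self ht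
    rw [(hDu t ht').deriv]
    have h1 := hvge t ht'
    have h2 := hxge t ht'
    have h3 : (0:ℝ) < (x₁ t)^2 := by nlinarith
    have h5 : (1:ℝ) ≤ 2 * v t / x₁ t ^ 2 := by
      rw [le_div_iff₀ h3]; nlinarith
    have h6 : 2 * (-v t / x₁ t ^ 2) = -(2 * v t / x₁ t ^ 2) := by ring
    linarith [h6 ▸ le_refl (1 + 2 * (-v t / x₁ t ^ 2)), h5]
  have hblt : b < 2 := by
    have h0 := huanti (left_mem_Icc.2 hb0) (right_mem_Icc.2 hb0) hb0
    change b + 2 / x₁ b ≤ 0 + 2 / x₁ 0 at h0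
    rw [hx0] at h0
    have h2 : 0 < 2/(x₁ b) := by
      have := hxge b (right_mem_Icc.2 hb0); positivity
    norm_num at h0
    linarith
  exact ⟨fun t ht => ⟨hvpos t ht, hxge t ht⟩, hvmono, hblt⟩

/-- `x₁` solves `ẍ₁ = ẋ₁ · p(x₁)` on `[0, T)`, `T : EReal`. -/
def SolvesGeo (p : ℝ → ℝ) (x₁ : ℝ → ℝ) (T : EReal) : Prop :=
  ∀ t : ℝ, 0 ≤ t → (t : EReal) < T →
    DifferentiableAt ℝ x₁ t ∧ DifferentiableAt ℝ (deriv x₁) t ∧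
    deriv (deriv x₁) t = deriv x₁ t * p (x₁ t)

theorem stmt_13 (p : ℝ → ℝ) (hp : ContDiff ℝ (⊤ : ℕ∞) p)
    (hpy : ∀ y : ℝ, 1 ≤ y → y ≤ p y)
    (x₁ : ℝ → ℝ) (T : EReal) (hT : 0 < T)
    (hx0 : x₁ 0 = 1) (hx'0 : deriv x₁ 0 = 1)
    (hsol : SolvesGeo p x₁ T)
    (hmax : ¬ ∃ (T' : EReal) (y₁ : ℝ → ℝ), T < T' ∧
        (∀ t : ℝ, 0 ≤ t → (t : EReal) < T → y₁ t = x₁ t) ∧ SolvesGeo p y₁ T') :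
    T < ⊤ ∧
    Filter.Tendsto (deriv x₁) (nhdsWithin T.toReal (Set.Iio T.toReal)) Filter.atTop := by
  have hpc : Continuous p := hp.continuous
  have hcov : ∀ b : ℝ, 0 ≤ b → (b : EReal) < T → ∀ t ∈ Icc (0:ℝ) b,
      DifferentiableAt ℝ x₁ t ∧ DifferentiableAt ℝ (deriv x₁) t ∧
      deriv (deriv x₁) t = deriv x₁ t * p (x₁ t) := by
    intro b _ hbT t ht
    exact hsol t ht.1 (lt_of_le_of_lt (EReal.coe_le_coe_iff.2 ht.2) hbT)
  have hTtop : T < ⊤ := by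
    by_contra hc
    have hTeq : T = ⊤ := top_le_iff.1 (not_lt.1 hc)
    have := (geo_aux p hpc hpy x₁ hx0 hx'0 2 (by norm_num)
      (hcov 2 (by norm_num) (by rw [hTeq]; exact lt_of_lt_of_le (EReal.coe_lt_top 2) le_rfl))).2.2
    linarith
  refine ⟨hTtop, ?_⟩
  set τ := T.toReal with hτdef
  have hTco : T = ((τ : ℝ) : EReal) := (EReal.coe_toReal hTtop.ne (ne_bot_of_gt hT)).symm
  have hτpos : 0 < τ := by
    rw [hTco] at hT
    exact_mod_cast hT
  set v := deriv x₁ with hvdef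
  -- key facts below any b < τ
  have hkey : ∀ b : ℝ, b ∈ Ico (0:ℝ) τ →
      (∀ t ∈ Icc (0:ℝ) b, 0 < v t ∧ 1 ≤ x₁ t) ∧ MonotoneOn v (Icc (0:ℝ) b) ∧ b < 2 := by
    intro b hb
    exact geo_aux p hpc hpy x₁ hx0 hx'0 b hb.1
      (hcov b hb.1 (by rw [hTco]; exact_mod_cast hb.2))
  have hvpos : ∀ t ∈ Ico (0:ℝ) τ, 0 < v t := fun t ht =>
    ((hkey t ht).1 t (right_mem_Icc.2 ht.1)).1
  have hxge : ∀ t ∈ Ico (0:ℝ) τ, 1 ≤ x₁ t := fun t ht =>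
    ((hkey t ht).1 t (right_mem_Icc.2 ht.1)).2
  have hvmono : ∀ s t : ℝ, s ∈ Ico (0:ℝ) τ → t ∈ Ico (0:ℝ) τ → s ≤ t → v s ≤ v t := by
    intro s t hs ht hst
    exact (hkey t ht).2.1 ⟨hs.1, hst⟩ (right_mem_Icc.2 ht.1) hst
  by_contra hnot
  -- v is bounded on [0, τ)
  obtain ⟨M, hM1, hMb⟩ : ∃ M : ℝ, 1 ≤ M ∧ ∀ t ∈ Ico (0:ℝ) τ, v t ≤ M := by
    by_contra hub
    push_neg at hub
    apply hnot
    rw [Filter.tendsto_atTop]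
    intro M
    obtain ⟨t₁, ht₁, hMt₁⟩ := hub (max M 1) (le_max_right _ _)
    filter_upwards [Ioo_mem_nhdsLT_of_mem (⟨ht₁.2, le_rfl⟩ : τ ∈ Ioc t₁ τ)] with s hs
    exact le_trans (le_trans (le_max_left M 1) hMt₁.le)
      (hvmono t₁ s ht₁ ⟨le_trans ht₁.1 hs.1.le, hs.2⟩ hs.1.le)
  -- hence x₁ is bounded on [0, τ)
  set X := 1 + M * τ with hXdef
  have hxle : ∀ t ∈ Ico (0:ℝ) τ, x₁ t ≤ X := by
    intro t ht
    have key : x₁ t - M * t ≤ 1 := by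
      have hanti : AntitoneOn (fun s => x₁ s - M * s) (Icc (0:ℝ) t) := by
        have hsub : Icc (0:ℝ) t ⊆ Ico (0:ℝ) τ := fun s hs => ⟨hs.1, lt_of_le_of_lt hs.2 ht.2⟩
        have hDg : ∀ s ∈ Icc (0:ℝ) t, HasDerivAt (fun s => x₁ s - M * s) (v s - M) s := by
          intro s hs
          have h1 : HasDerivAt x₁ (v s) s :=
            (hsol s hs.1 (by rw [hTco]; exact_mod_cast (hsub hs).2)).1.hasDerivAt
          have := h1.sub ((hasDerivAt_id' s).const_mul M); rwa [mul_one] at this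
        refine antitoneOn_of_deriv_nonpos (convex_Icc _ _)
          (fun s hs => (hDg s hs).continuousAt.continuousWithinAt)
          (fun s hs => (hDg s (interior_subset hs)).differentiableAt.differentiableWithinAt) ?_
        intro s hs
        rw [interior_Icc] at hs
        rw [(hDg s (Ioo_subset_Icc_self hs)).deriv]
        have := hMb s (hsub (Ioo_subset_Icc_self hs))
        linarith
      have := hanti (left_mem_Icc.2 ht.1) (right_mem_Icc.2 ht.1) ht.1
      simp only at this
      rw [hx0] at this
      linarith [this]
    have hMt : M * t ≤ M * τ := by
      have := ht.2.le
      nlinarith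
    rw [hXdef]; linarith
  -- ============ extension construction ============
  -- planar vector field
  set f : ℝ × ℝ → ℝ × ℝ := fun z => (z.2, z.2 * p z.1) with hfdef
  have hfC : ContDiff ℝ 1 f :=
    contDiff_snd.prodMk (contDiff_snd.mul ((hp.of_le (by simp)).comp contDiff_fst))
  have hX1 : 1 ≤ X := by nlinarith
  set K₁ : Set (ℝ × ℝ) := Icc 0 (X+1) ×ˢ Icc (-1) (M+1) with hK₁def
  set K₀ : Set (ℝ × ℝ) := Icc 1 X ×ˢ Icc 0 M with hK₀def
  have hK₀K₁ : K₀ ⊆ K₁ :=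
    prod_mono (Icc_subset_Icc (by linarith) (by linarith))
      (Icc_subset_Icc (by linarith) (by linarith))
  set pr : ℝ × ℝ → ℝ × ℝ :=
    fun z => (max 0 (min z.1 (X+1)), max (-1) (min z.2 (M+1))) with hprdef
  have hπK : ∀ z, pr z ∈ K₁ := by
    intro z
    exact ⟨⟨le_max_left _ _, max_le (by linarith) (min_le_right _ _)⟩,
           le_max_left _ _, max_le (by linarith) (min_le_right _ _)⟩
  have hπid : ∀ z ∈ K₁, pr z = z := by
    intro z hz
    obtain ⟨⟨h1, h2⟩, h3, h4⟩ := hz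
    show (max 0 (min z.1 (X+1)), max (-1) (min z.2 (M+1))) = z
    rw [min_eq_left h2, max_eq_right h1, min_eq_left h4, max_eq_right h3]
  have hπlip : LipschitzWith 1 pr := by
    have h1 : LipschitzWith 1 fun z : ℝ × ℝ => max 0 (min z.1 (X+1)) :=
      ((LipschitzWith.prod_fst).min_const (X+1)).const_max 0
    have h2 : LipschitzWith 1 fun z : ℝ × ℝ => max (-1) (min z.2 (M+1)) :=
      ((LipschitzWith.prod_snd).min_const (M+1)).const_max (-1)
    simpa using h1.prodMk h2
  have hK₁c : IsCompact K₁ := isCompact_Icc.prod isCompact_Icc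
  have hK₁conv : Convex ℝ K₁ := (convex_Icc _ _).prod (convex_Icc _ _)
  obtain ⟨B, hB⟩ := hK₁c.exists_bound_of_continuousOn (hfC.continuous_fderiv one_ne_zero).continuousOn
  set Lf : NNReal := ⟨max B 0, le_max_right _ _⟩ with hLfdef
  have hflip : LipschitzOnWith Lf f K₁ := by
    refine Convex.lipschitzOnWith_of_nnnorm_fderiv_le
      (fun z hz => (hfC.differentiable one_ne_zero).differentiableAt) (fun z hz => ?_) hK₁conv
    have h5 : ‖fderiv ℝ f z‖ ≤ max B 0 := le_max_of_le_left (hB z hz)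
    exact_mod_cast h5
  set ft : ℝ × ℝ → ℝ × ℝ := fun z => f (pr z) with hftdef
  have hftlip : LipschitzWith Lf ft := by
    intro z1 z2
    calc edist (ft z1) (ft z2) ≤ Lf * edist (pr z1) (pr z2) := hflip (hπK z1) (hπK z2)
    _ ≤ Lf * (1 * edist z1 z2) := by gcongr; exact hπlip z1 z2
    _ = Lf * edist z1 z2 := by rw [one_mul]
  obtain ⟨C₀, hC₀⟩ := hK₁c.exists_bound_of_continuousOn hfC.continuous.continuousOn
  set C₁ := max C₀ 0 with hC₁def
  have hC₁0 : 0 ≤ C₁ := le_max_right _ _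
  have hftb : ∀ z, ‖ft z‖ ≤ C₁ := fun z => le_max_of_le_left (hC₀ (pr z) (hπK z))
  -- the solution curve in the plane
  set c : ℝ → ℝ × ℝ := fun t => (x₁ t, v t) with hcdef
  have hcK₀ : ∀ t ∈ Ico (0:ℝ) τ, c t ∈ K₀ := fun t ht =>
    ⟨⟨hxge t ht, hxle t ht⟩, (hvpos t ht).le, hMb t ht⟩
  have hcD : ∀ t ∈ Ico (0:ℝ) τ, HasDerivAt c (ft (c t)) t := by
    intro t ht
    have htT : (t : EReal) < T := by rw [hTco]; exact_mod_cast ht.2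
    obtain ⟨h1, h2, h3⟩ := hsol t ht.1 htT
    have hxD : HasDerivAt x₁ (v t) t := h1.hasDerivAt
    have hvD : HasDerivAt v (v t * p (x₁ t)) t := h3 ▸ h2.hasDerivAt
    have hprod : HasDerivAt c (v t, v t * p (x₁ t)) t := hxD.prodMk hvD
    have heq : ft (c t) = (v t, v t * p (x₁ t)) := by
      show f (pr (c t)) = _
      rw [hπid _ (hK₀K₁ (hcK₀ t ht))]
    rwa [heq]
  -- Picard–Lindelöf from time a := τ/2
  set a := τ/2 with hadef
  have ha0 : 0 ≤ a := by positivity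
  have haτ : a < τ := by rw [hadef]; linarith
  have hPL : IsPicardLindelof (fun _ => ft) (tmin := a) (tmax := τ+1) ⟨a, le_rfl, by linarith⟩
      (c a) ⟨(C₁+1)*(τ+1), mul_nonneg (by linarith) (by linarith)⟩ 0 ⟨C₁, hC₁0⟩ Lf :=
    IsPicardLindelof.of_time_independent (fun z _ => hftb z) hftlip.lipschitzOnWith (by
      show C₁ * max (τ+1-a) (a-a) ≤ (C₁+1)*(τ+1) - 0
      rw [sub_self, max_eq_left (by linarith : (0:ℝ) ≤ τ+1-a)]
      nlinarith)
  obtain ⟨α, hα1, hα2⟩ := hPL.exists_eq_forall_mem_Icc_hasDerivWithinAt₀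
  have hαcont : ContinuousOn α (Icc a (τ+1)) := fun t ht => (hα2 t ht).continuousWithinAt
  -- uniqueness: α agrees with c on [a, τ)
  have hEq : ∀ t ∈ Ico a τ, c t = α t := by
    intro t ht
    have hsub : Icc a t ⊆ Ico 0 τ := fun s hs => ⟨le_trans ha0 hs.1, lt_of_le_of_lt hs.2 ht.2⟩
    have h6 := ODE_solution_unique (v := fun _ => ft) (K := Lf) (fun _ => hftlip)
      (fun s hs => (hcD s (hsub hs)).continuousAt.continuousWithinAt)
      (fun s hs => (hcD s (hsub (Ico_subset_Icc_self hs))).hasDerivWithinAt)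
      (hαcont.mono (Icc_subset_Icc_right (by linarith [ht.2] : t ≤ τ+1)))
      (fun s hs => (hα2 s ⟨hs.1, by linarith [hs.2, ht.2]⟩).mono_of_mem_nhdsWithin
        (Icc_mem_nhdsGE_of_mem ⟨hs.1, by linarith [hs.2, ht.2]⟩))
      hα1.symm
    exact h6 (right_mem_Icc.2 ht.1)
  -- α τ lies in the compact K₀
  have hτmem : τ ∈ Icc a (τ+1) := ⟨haτ.le, by linarith⟩
  have hne : (𝓝[Ico a τ] τ).NeBot := by
    rw [← mem_closure_iff_nhdsWithin_neBot, closure_Ico (ne_of_lt haτ)]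
    exact ⟨haτ.le, le_rfl⟩
  have hαtend : Filter.Tendsto α (𝓝[Ico a τ] τ) (𝓝 (α τ)) :=
    (hαcont τ hτmem).mono_left (nhdsWithin_mono τ (fun s hs => ⟨hs.1, by linarith [hs.2]⟩))
  have hατK₀ : α τ ∈ K₀ := by
    have hK₀closed : IsClosed K₀ := isClosed_Icc.prod isClosed_Icc
    refine hK₀closed.mem_of_tendsto hαtend ?_
    filter_upwards [self_mem_nhdsWithin] with s hs
    rw [← hEq s hs]
    exact hcK₀ s ⟨le_trans ha0 hs.1, hs.2⟩
  have hK₀int : K₀ ⊆ interior K₁ := by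
    rw [hK₁def, interior_prod_eq, interior_Icc, interior_Icc]
    rintro ⟨z1, z2⟩ ⟨⟨h1, h2⟩, h3, h4⟩
    exact ⟨⟨by linarith, by linarith⟩, by linarith, by linarith⟩
  -- α stays in K₁ a bit past τ
  have hmem : ∀ᶠ s in 𝓝[Icc a (τ+1)] τ, α s ∈ interior K₁ :=
    (hαcont τ hτmem).eventually_mem (isOpen_interior.mem_nhds (hK₀int hατK₀))
  obtain ⟨U, hUopen, hτU, hUsub⟩ := mem_nhdsWithin.1 hmem
  obtain ⟨ε, hε0, hball⟩ := Metric.isOpen_iff.1 hUopen τ hτU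
  set δ := min (ε/2) 1 with hδdef
  have hδ0 : 0 < δ := lt_min (by linarith) one_pos
  have hδ1 : δ ≤ 1 := min_le_right _ _
  have hδε : δ ≤ ε/2 := by rw [hδdef]; exact min_le_left _ _
  have hδK₁ : ∀ s ∈ Icc τ (τ+δ), α s ∈ K₁ := by
    intro s hs
    have h7 : s ∈ Metric.ball τ ε := by
      rw [Metric.mem_ball, Real.dist_eq, abs_of_nonneg (by linarith [hs.1])]
      linarith [hs.2]
    have h8 : s ∈ Icc a (τ+1) := ⟨by linarith [hs.1], by linarith [hs.2]⟩
    exact interior_subset (hUsub ⟨hball h7, h8⟩)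
  -- the open interval on which the glued solution lives
  set V := Ioo a (τ + δ) with hVdef
  have hVopen : IsOpen V := isOpen_Ioo
  have hαK₁ : ∀ t ∈ V, α t ∈ K₁ := by
    intro t htV
    rcases lt_or_ge t τ with h | h
    · rw [← hEq t ⟨htV.1.le, h⟩]
      exact hK₀K₁ (hcK₀ t ⟨le_trans ha0 htV.1.le, h⟩)
    · exact hδK₁ t ⟨h, htV.2.le⟩
  have hαD : ∀ t ∈ V, HasDerivAt α (f (α t)) t := by
    intro t htV
    have h1 : HasDerivAt α (ft (α t)) t :=
      (hα2 t ⟨htV.1.le.trans le_rfl |>.trans le_rfl |> fun h => h, by linarith [htV.2]⟩).hasDerivAt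
        (Icc_mem_nhds htV.1 (by linarith [htV.2]))
    have h2 : ft (α t) = f (α t) := by
      show f (pr (α t)) = f (α t)
      rw [hπid _ (hαK₁ t htV)]
    rwa [h2] at h1
  -- the glued scalar solution
  set y₁ : ℝ → ℝ := fun t => if t < τ then x₁ t else (α t).1 with hy₁def
  have hyx : EqOn y₁ x₁ (Iio τ) := fun t ht => if_pos ht
  have hyα : EqOn y₁ (fun t => (α t).1) V := by
    intro t htV
    by_cases h : t < τ
    · have h2 := hEq t ⟨htV.1.le, h⟩
      show (if t < τ then x₁ t else (α t).1) = (α t).1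
      rw [if_pos h, ← h2]
    · show (if t < τ then x₁ t else (α t).1) = (α t).1
      rw [if_neg h]
  have hα₁D : ∀ t ∈ V, HasDerivAt (fun s => (α s).1) ((α t).2) t := by
    intro t htV
    have h3 := (ContinuousLinearMap.fst ℝ ℝ ℝ).hasFDerivAt.comp_hasDerivAt t (hαD t htV)
    simp [hfdef] at h3; exact h3
  have hα₂D : ∀ t ∈ V, HasDerivAt (fun s => (α s).2) ((α t).2 * p ((α t).1)) t := by
    intro t htV
    have h3 := (ContinuousLinearMap.snd ℝ ℝ ℝ).hasFDerivAt.comp_hasDerivAt t (hαD t htV)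
    simp [hfdef] at h3; exact h3
  have hyD : ∀ t ∈ V, HasDerivAt y₁ ((α t).2) t := fun t htV =>
    (hα₁D t htV).congr_of_eventuallyEq (Filter.eventuallyEq_of_mem (hVopen.mem_nhds htV) hyα)
  have hyderiv : ∀ t ∈ V, deriv y₁ t = (α t).2 := fun t htV => (hyD t htV).deriv
  have hy2D : ∀ t ∈ V, HasDerivAt (deriv y₁) ((α t).2 * p ((α t).1)) t := fun t htV =>
    (hα₂D t htV).congr_of_eventuallyEq
      (Filter.eventuallyEq_of_mem (hVopen.mem_nhds htV) (fun s hs => hyderiv s hs))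
  -- y₁ solves the ODE on [0, τ + δ/2)
  have hsolves : SolvesGeo p y₁ ((τ + δ/2 : ℝ) : EReal) := by
    intro t ht0 htT'
    have ht' : t < τ + δ/2 := by exact_mod_cast htT'
    by_cases htτ : t < τ
    · have hev : y₁ =ᶠ[𝓝 t] x₁ := Filter.eventuallyEq_of_mem (isOpen_Iio.mem_nhds htτ) hyx
      have hdev : deriv y₁ =ᶠ[𝓝 t] deriv x₁ :=
        Filter.eventuallyEq_of_mem (isOpen_Iio.mem_nhds htτ)
          (fun s hs => (Filter.eventuallyEq_of_mem (isOpen_Iio.mem_nhds hs) hyx).deriv_eq)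
      obtain ⟨h1, h2, h3⟩ := hsol t ht0 (by rw [hTco]; exact_mod_cast htτ)
      refine ⟨hev.differentiableAt_iff.2 h1, hdev.differentiableAt_iff.2 h2, ?_⟩
      rw [hdev.deriv_eq, h3, hdev.eq_of_nhds, hyx htτ]
    · have htV : t ∈ V := ⟨lt_of_lt_of_le haτ (not_lt.1 htτ), by linarith⟩
      refine ⟨(hyD t htV).differentiableAt, (hy2D t htV).differentiableAt, ?_⟩
      rw [(hy2D t htV).deriv, hyderiv t htV, hyα htV]
  -- contradiction with maximality
  apply hmax
  refine ⟨((τ + δ/2 : ℝ) : EReal), y₁, ?_, ?_, hsolves⟩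
  · rw [hTco]; exact_mod_cast (by linarith : τ < τ + δ/2)
  · intro t ht0 htT
    refine hyx ?_
    rw [hTco] at htT
    exact_mod_cast htT
end
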